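/- Let $n, d, p$ be integers with $0 \le d < n$ and $0 \le p \le n-d$. For every co-signotope $\tau \in \bar{\mathcal{S}}_p(n,d)$ with $+$-component decomposition $\Delta(\tau)=(\tau_0,\tau_1,\dots,\tau_d)$, the sign function $\tau_i$ is a co-signotope belonging to $\bar{\mathcal{S}}_{|\mathcal{C}^{\tau}_i|,i}(n,d)$ for every $i \in \{0,1,\dots,d\}$. -/

import Mathlib

/-! Common definitions: signotopes and co-signotopes on `[n] = {1, …, n}` (encoded as
`Finset.Icc 1 n` in `ℕ`), sign functions are `Finset ℕ → Bool` (`true` = `+`, `false` = `-`)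
that vanish (are `-`) away from the relevant subsets. -/

open Classical in
/-- The sign function with `+`-set `S` (and `-` elsewhere). -/
noncomputable def ofPlusSet (S : Set (Finset ℕ)) : Finset ℕ → Bool :=
  fun A => if A ∈ S then true else false

/-- Number of sign changes in a list of signs. -/
def signChanges (l : List Bool) : ℕ :=
  ((l.zip l.tail).filter fun p => p.1 ≠ p.2).length

/-- Number of `+`-subsets of a sign function. -/
noncomputable def plusCount (τ : Finset ℕ → Bool) : ℕ :=
  {A : Finset ℕ | τ A = true}.ncard

/-- The series of signs `τ (C ∪ {x})` for `x ∈ [n] \ C` in increasing order.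
For a `d`-subset `B` with `i`-th smallest element `b`, `series n τ (B.erase b)` is
the `(τ,B,i)`-series. -/
def series (n : ℕ) (τ : Finset ℕ → Bool) (C : Finset ℕ) : List Bool :=
  ((Finset.Icc 1 n \ C).sort (· ≤ ·)).map fun x => τ (insert x C)

/-- An `r`-signotope on `[n]`, encoded as a sign function on all of `Finset ℕ`
which is `-` away from the `r`-subsets of `[n]`. -/
def IsSignotope (n r : ℕ) (σ : Finset ℕ → Bool) : Prop :=
  (∀ A, σ A = true → A ⊆ Finset.Icc 1 n ∧ A.card = r) ∧
  ∀ X : Finset ℕ, X ⊆ Finset.Icc 1 n → X.card = r + 1 →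
    signChanges ((X.sort (· ≤ ·)).map fun x => σ (X.erase x)) ≤ 1

/-- A `d`-co-signotope on `[n]`: every `(τ,B,i)`-series has at most one sign change. -/
def IsCoSignotope (n d : ℕ) (τ : Finset ℕ → Bool) : Prop :=
  (∀ A, τ A = true → A ⊆ Finset.Icc 1 n ∧ A.card = d) ∧
  ∀ B : Finset ℕ, B ⊆ Finset.Icc 1 n → B.card = d → ∀ b ∈ B,
    signChanges (series n τ (B.erase b)) ≤ 1

/-- `𝒮_p(n,r)`: `r`-signotopes on `[n]` with exactly `p` `+`-signs. -/
noncomputable def sigSet (n r p : ℕ) : Set (Finset ℕ → Bool) :=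
  {σ | IsSignotope n r σ ∧ plusCount σ = p}

/-- `𝒮_{≤p}(n,r)`. -/
noncomputable def sigSetLe (n r p : ℕ) : Set (Finset ℕ → Bool) :=
  {σ | IsSignotope n r σ ∧ plusCount σ ≤ p}

/-- `𝒮̄_p(n,d)`: `d`-co-signotopes on `[n]` with exactly `p` `+`-subsets. -/
noncomputable def coSigSet (n d p : ℕ) : Set (Finset ℕ → Bool) :=
  {τ | IsCoSignotope n d τ ∧ plusCount τ = p}

/-- `𝒮̄_{≤p}(n,d)`. -/
noncomputable def coSigSetLe (n d p : ℕ) : Set (Finset ℕ → Bool) :=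
  {τ | IsCoSignotope n d τ ∧ plusCount τ ≤ p}

/-- `σ` and `τ` differ by a single step: `σ⁻¹(+) ⊊ τ⁻¹(+)` and `|τ⁻¹(+)| = |σ⁻¹(+)| + 1`. -/
noncomputable def SingleStep (σ τ : Finset ℕ → Bool) : Prop :=
  {A | σ A = true} ⊂ {A | τ A = true} ∧ plusCount τ = plusCount σ + 1

/-- The higher Bruhat order on `r`-signotopes on `[n]`: reflexive-transitive closure of
the single step relation. -/
noncomputable def BruhatLe (n r : ℕ) (σ τ : Finset ℕ → Bool) : Prop :=
  Relation.ReflTransGen (fun a b => IsSignotope n r a ∧ IsSignotope n r b ∧ SingleStep a b) σ τ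

/-- The complementary higher Bruhat order on `d`-co-signotopes on `[n]`. -/
noncomputable def CoBruhatLe (n d : ℕ) (σ τ : Finset ℕ → Bool) : Prop :=
  Relation.ReflTransGen (fun a b => IsCoSignotope n d a ∧ IsCoSignotope n d b ∧ SingleStep a b) σ τ

/-- Adjacency in the graph `G_{n,d}`: `B' = (B \ {x}) ∪ {y}` with no element of `B \ {x}`
strictly between `x` and `y`. -/
def GAdj (n d : ℕ) (B B' : Finset ℕ) : Prop :=
  B ⊆ Finset.Icc 1 n ∧ B.card = d ∧ B' ⊆ Finset.Icc 1 n ∧ B'.card = d ∧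
  ∃ x ∈ B, ∃ y ∈ Finset.Icc 1 n, y ∉ B ∧ B' = insert y (B.erase x) ∧
    ∀ z ∈ B.erase x, ¬(min x y < z ∧ z < max x y)

/-- The source subset `S_{n,d,i} = {1,…,i} ∪ {n-d+i+1,…,n}`. -/
def sourceSubset (n d i : ℕ) : Finset ℕ :=
  Finset.Icc 1 i ∪ Finset.Icc (n - d + i + 1) n

/-- Connectivity inside the `+`-subsets of `τ` (the induced subgraph `G_{n,d}[τ]`). -/
def plusConn (n d : ℕ) (τ : Finset ℕ → Bool) : Finset ℕ → Finset ℕ → Prop :=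
  Relation.ReflTransGen fun A A' => τ A = true ∧ τ A' = true ∧ GAdj n d A A'

/-- The vertex set `𝒞^τ_i` of the `+`-component of `τ` containing `S_{n,d,i}`
(empty if `S_{n,d,i}` is not a `+`-subset). -/
def comp (n d : ℕ) (τ : Finset ℕ → Bool) (i : ℕ) : Set (Finset ℕ) :=
  {B | τ (sourceSubset n d i) = true ∧ τ B = true ∧ plusConn n d τ (sourceSubset n d i) B}

/-- The `j`-th smallest element (1-based) of a finite set of naturals. -/
def nthElt (B : Finset ℕ) (j : ℕ) : ℕ := (B.sort (· ≤ ·)).getD (j - 1) 0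

/-- `b_j` with the conventions `b_0 = 0` and `b_{d+1} = n+1` (as an integer). -/
def extNth (n d : ℕ) (B : Finset ℕ) (j : ℕ) : ℤ :=
  if j = 0 then 0 else if j ≤ d then (nthElt B j : ℤ) else (n : ℤ) + 1

/-- A series is left-aligned if it starts with `+` and ends with `-`. -/
def LeftAligned (l : List Bool) : Prop :=
  l.head? = some true ∧ l.getLast? = some false

/-- A series is right-aligned if it starts with `-` and ends with `+`. -/
def RightAligned (l : List Bool) : Prop :=
  l.head? = some false ∧ l.getLast? = some true

/-- `𝒮̄_{p,i}(n,d)`: co-signotopes in `𝒮̄_p(n,d)` whose only nonempty `+`-component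
is `𝒞^τ_i` (i.e. every `+`-subset lies in `𝒞^τ_i`). -/
noncomputable def coSigOnly (n d p i : ℕ) : Set (Finset ℕ → Bool) :=
  {τ | IsCoSignotope n d τ ∧ plusCount τ = p ∧ ∀ B, τ B = true → B ∈ comp n d τ i}

/-- `Z(d,i)`: points `(a_1,…,a_d) ∈ ℤ_{>0}^d` (0-indexed in Lean) with `a_j ≥ a_{j-1}`
for `j ∈ [2,i]` and `a_j ≥ a_{j+1}` for `j ∈ [i+1,d-1]` (1-based indices). -/
def ZSet (d i : ℕ) : Set (Fin d → ℤ) :=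
  {a | (∀ j, 0 < a j) ∧
    (∀ j k : Fin d, (j : ℕ) + 1 = (k : ℕ) → (k : ℕ) + 1 ≤ i → a j ≤ a k) ∧
    (∀ j k : Fin d, (j : ℕ) + 1 = (k : ℕ) → i ≤ (j : ℕ) → a k ≤ a j)}

/-- A `(d,i)`-Ferrers diagram with respect to `p`. -/
def IsFerrers (d i p : ℕ) (F : Set (Fin d → ℤ)) : Prop :=
  F ⊆ ZSet d i ∧ F.ncard = p ∧
  ∀ a ∈ F, ∀ a' ∈ ZSet d i, (∀ j, a' j ≤ a j) → a' ∈ F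

/-- The number of `(d,i)`-Ferrers diagrams with respect to `p`. -/
noncomputable def ferrersCount (d i p : ℕ) : ℕ :=
  {F : Set (Fin d → ℤ) | IsFerrers d i p F}.ncard

/-- `f_{n,d,i,j}` (here `j` is the 1-based coordinate index). -/
def fFun (n d i j : ℕ) (x : ℕ) : ℤ :=
  if j ≤ i then (x : ℤ) - j + 1 else ((n : ℤ) - x) - ((d : ℤ) - j) + 1

/-- `g_{n,d,i}` maps a `d`-subset `B = (b_1 < … < b_d)` to
`(f_{n,d,i,1}(b_1), …, f_{n,d,i,d}(b_d))`. -/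
def gMap (n d i : ℕ) (B : Finset ℕ) : Fin d → ℤ :=
  fun k => fFun n d i ((k : ℕ) + 1) (nthElt B ((k : ℕ) + 1))

/-- A sparse composition of `p` of length `d+1`. -/
def IsSparseComposition (d p : ℕ) (c : Fin (d + 1) → ℕ) : Prop :=
  (∑ i, c i) = p ∧
  ∀ i : Fin (d + 1), 1 ≤ (i : ℕ) →
    c i = 0 ∨ c ⟨(i : ℕ) - 1, lt_of_le_of_lt (Nat.sub_le _ _) i.isLt⟩ = 0

/-- The component `τ_i` of the `+`-component decomposition `Δ(τ)`:
the sign function whose `+`-set is `𝒞^τ_i`. -/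
noncomputable def compFun (n d : ℕ) (τ : Finset ℕ → Bool) (i : ℕ) : Finset ℕ → Bool :=
  ofPlusSet (comp n d τ i)

/-- Keep the `i` smallest elements of `B` and shift the others by `ñ - n`
(this is `g⁻¹_{ñ,d,i} ∘ g_{n,d,i}` on `d`-subsets). -/
def gammaSet (n tn i : ℕ) (B : Finset ℕ) : Finset ℕ :=
  ((B.sort (· ≤ ·)).mapIdx fun k x => if k < i then x else x + tn - n).toFinset

/-- The map `h_{n,ñ,d,p,i}` on sign functions. -/
noncomputable def hFun (n tn i : ℕ) (τ : Finset ℕ → Bool) : Finset ℕ → Bool :=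
  ofPlusSet {A | ∃ B, τ B = true ∧ A = gammaSet n tn i B}

open Classical in
/-- `γ_{τ,ñ}(B)`: replace `b_j` by `b_j + ñ - n` whenever the `(τ,B,j)`-series is
right-aligned. -/
noncomputable def gammaFun (n tn : ℕ) (τ : Finset ℕ → Bool) (B : Finset ℕ) : Finset ℕ :=
  B.image fun x => if RightAligned (series n τ (B.erase x)) then x + tn - n else x

/-- The simple bijection `φ_{n,ñ,d,p}` on sign functions. -/
noncomputable def phiFun (n tn : ℕ) (τ : Finset ℕ → Bool) : Finset ℕ → Bool :=
  ofPlusSet {A | ∃ B, τ B = true ∧ A = gammaFun n tn τ B}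

/-! For a co-signotope `τ` with at most `n - d` `+`-subsets, any two `+`-subsets `C ∪ {x}` and
`C ∪ {y}` lie in the same `+`-component. Move `x` towards `y` one step at a time: a free
intermediate position is a `+`-subset because a series changes sign at most once, and when the
element `c = y - 1` of `C` blocks the move, `(C \ {c}) ∪ {x, y}` must be a `+`-subset, since
otherwise the series through `(C \ {c}) ∪ {x}` and `(C \ {c}) ∪ {y}` would carry `n - d + 1`
distinct `+`-subsets. Hence along every series `τ_i` either agrees with `τ` or is constantly `-`,
so it is again a co-signotope. -/

open Finset

lemma ofPlusSet_eq_true {S : Set (Finset ℕ)} {A : Finset ℕ} :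
    ofPlusSet S A = true ↔ A ∈ S := by
  unfold ofPlusSet; split <;> simp_all

lemma signChanges_cons_cons (a b : Bool) (l : List Bool) :
    signChanges (a :: b :: l) = (if a = b then 0 else 1) + signChanges (b :: l) := by
  simp only [signChanges, List.tail_cons, List.zip_cons_cons, List.filter_cons]
  by_cases h : a = b <;> simp [h]; omega

lemma signChanges_le_cons (a : Bool) (l : List Bool) :
    signChanges l ≤ signChanges (a :: l) := by
  cases l with
  | nil => simp [signChanges]
  | cons b t => rw [signChanges_cons_cons]; exact Nat.le_add_left _ _

lemma signChanges_cons_le_cons_cons (a b : Bool) (l : List Bool) :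
    signChanges (a :: l) ≤ signChanges (a :: b :: l) := by
  cases l with
  | nil => simp [signChanges]
  | cons c t =>
    simp only [signChanges_cons_cons]
    cases a <;> cases b <;> cases c <;> simp <;> omega

lemma signChanges_le_of_sublist {l₁ l₂ : List Bool} (h : l₁.Sublist l₂) :
    signChanges l₁ ≤ signChanges l₂ := by
  suffices signChanges l₁ ≤ signChanges l₂ ∧
      ∀ a, signChanges (a :: l₁) ≤ signChanges (a :: l₂) from this.1
  induction h with
  | slnil => exact ⟨le_rfl, fun _ => le_rfl⟩
  | cons b _ ih =>
    exact ⟨ih.1.trans (signChanges_le_cons b _),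
      fun a => (ih.2 a).trans (signChanges_cons_le_cons_cons a b _)⟩
  | cons_cons b _ ih =>
    refine ⟨ih.2 b, fun a => ?_⟩
    rw [signChanges_cons_cons, signChanges_cons_cons]
    exact Nat.add_le_add_left (ih.2 b) _

lemma signChanges_eq_zero_of_forall_eq {l : List Bool} {a : Bool} (h : ∀ x ∈ l, x = a) :
    signChanges l = 0 := by
  simp only [signChanges, List.length_eq_zero_iff, List.filter_eq_nil_iff]
  intro p hp
  obtain ⟨h₁, h₂⟩ := List.of_mem_zip hp
  simp [h _ h₁, h _ (List.mem_of_mem_tail h₂)]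

lemma triple_sublist_sort {s : Finset ℕ} {a b c : ℕ} (ha : a ∈ s) (hb : b ∈ s)
    (hc : c ∈ s) (hab : a < b) (hbc : b < c) : [a, b, c].Sublist (s.sort (· ≤ ·)) := by
  apply List.sublist_of_subperm_of_pairwise (r := (· ≤ ·))
  · apply List.Nodup.subperm
    · simp [hab.ne, hbc.ne, (hab.trans hbc).ne]
    · simp [List.subset_def, ha, hb, hc]
  · simp [hab.le, hbc.le, (hab.trans hbc).le]
  · exact Finset.pairwise_sort _ _

lemma GAdj.symm {n d : ℕ} {B B' : Finset ℕ} (h : GAdj n d B B') : GAdj n d B' B := by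
  obtain ⟨hB, hBc, hB', hB'c, x, hxB, y, hyI, hyB, rfl, hbetween⟩ := h
  have hyx : y ∉ B.erase x := fun h => hyB (mem_of_mem_erase h)
  refine ⟨hB', hB'c, hB, hBc, y, mem_insert_self _ _, x, hB hxB, ?_, ?_, ?_⟩
  · simp [ne_of_mem_of_not_mem hxB hyB]
  · rw [erase_insert hyx, insert_erase hxB]
  · rw [erase_insert hyx, min_comm, max_comm]
    exact hbetween

lemma plusConn_symm {n d : ℕ} {τ : Finset ℕ → Bool} {A A' : Finset ℕ}
    (h : plusConn n d τ A A') : plusConn n d τ A' A := by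
  induction h with
  | refl => exact .refl
  | tail _ hstep ih => exact .head ⟨hstep.2.1, hstep.1, hstep.2.2.symm⟩ ih

lemma plusConn_insert_succ {n d : ℕ} {τ : Finset ℕ → Bool} (hτ : IsCoSignotope n d τ)
    {K : Finset ℕ} {a : ℕ} (ha : a ∉ K) (ha' : a + 1 ∉ K)
    (hτa : τ (insert a K) = true) (hτa' : τ (insert (a + 1) K) = true) :
    plusConn n d τ (insert a K) (insert (a + 1) K) := by
  obtain ⟨hsub, hcard⟩ := hτ.1 _ hτa
  obtain ⟨hsub', hcard'⟩ := hτ.1 _ hτa'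
  refine .single ⟨hτa, hτa', hsub, hcard, hsub', hcard', a, mem_insert_self _ _, a + 1,
    hsub' (mem_insert_self _ _), by simp [ha'], by rw [erase_insert ha], ?_⟩
  intro z _
  omega

lemma card_Icc_sdiff_add_card_Icc_sdiff {n c : ℕ} {K : Finset ℕ} (hK : K ⊆ Icc 1 n)
    (hc : c ∈ Icc 1 n \ K) : #(Icc 1 c \ K) + #(Icc c n \ K) = n - #K + 1 := by
  simp only [mem_sdiff, mem_Icc] at hc
  have hunion : (Icc 1 c \ K) ∪ (Icc c n \ K) = Icc 1 n \ K := by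
    ext z; by_cases hz : z ∈ K <;> simp [hz]; omega
  have hinter : (Icc 1 c \ K) ∩ (Icc c n \ K) = {c} := by
    ext z; by_cases hz : z ∈ K <;> simp [hz]
    · rintro rfl; exact hc.2 hz
    · omega
  have := card_union_add_card_inter (Icc 1 c \ K) (Icc c n \ K)
  rw [hunion, hinter, card_sdiff_of_subset hK, Nat.card_Icc, card_singleton] at this
  omega

namespace IsCoSignotope

variable {n d : ℕ} {τ : Finset ℕ → Bool}

lemma card_le_plusCount (hτ : IsCoSignotope n d τ) {s : Finset (Finset ℕ)}
    (hs : ∀ A ∈ s, τ A = true) : #s ≤ plusCount τ := by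
  have hfin : {A | τ A = true}.Finite :=
    (Icc 1 n).powerset.finite_toSet.subset fun A hA => mem_coe.2 (mem_powerset.2 (hτ.1 A hA).1)
  rw [← Set.ncard_coe_finset]
  exact Set.ncard_le_ncard hs hfin

lemma card_add_one_of_insert (hτ : IsCoSignotope n d τ) {C : Finset ℕ} {x : ℕ} (hx : x ∉ C)
    (h : τ (insert x C) = true) : #C + 1 = d := by
  rw [← card_insert_of_notMem hx]; exact (hτ.1 _ h).2

lemma apply_insert_between_eq (hτ : IsCoSignotope n d τ) {C : Finset ℕ}
    (hC : C ⊆ Icc 1 n) (hcard : #C + 1 = d) {a b c : ℕ} (ha : a ∈ Icc 1 n \ C)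
    (hb : b ∈ Icc 1 n \ C) (hc : c ∈ Icc 1 n \ C) (hab : a < b) (hbc : b < c)
    (hac : τ (insert a C) = τ (insert c C)) : τ (insert b C) = τ (insert a C) := by
  obtain ⟨haI, haC⟩ := mem_sdiff.1 ha
  have hseries := hτ.2 (insert a C) (insert_subset haI hC)
    (by rw [card_insert_of_notMem haC, hcard]) a (mem_insert_self _ _)
  rw [erase_insert haC] at hseries
  have hsub := signChanges_le_of_sublist
    ((triple_sublist_sort ha hb hc hab hbc).map fun x => τ (insert x C))
  have hle := hsub.trans hseries
  rw [List.map_cons, List.map_cons, List.map_cons, List.map_nil, ← hac] at hle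
  revert hle
  cases τ (insert a C) <;> cases τ (insert b C) <;> simp [signChanges]

lemma apply_insert_eq_true_of_lt (hτ : IsCoSignotope n d τ) {C : Finset ℕ}
    (hC : C ⊆ Icc 1 n) (hcard : #C + 1 = d) {a b c : ℕ} (ha : a ∈ Icc 1 n \ C)
    (hb : b ∈ Icc 1 n \ C) (hc : c ∈ Icc 1 n \ C) (hab : a < b) (hbc : b < c)
    (hb' : τ (insert b C) = true) (hc' : τ (insert c C) = false) : τ (insert a C) = true := by
  by_contra ha'
  rw [Bool.not_eq_true] at ha'
  have := hτ.apply_insert_between_eq hC hcard ha hb hc hab hbc (ha'.trans hc'.symm)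
  rw [hb', ha'] at this
  exact Bool.noConfusion this

lemma apply_insert_eq_true_of_gt (hτ : IsCoSignotope n d τ) {C : Finset ℕ}
    (hC : C ⊆ Icc 1 n) (hcard : #C + 1 = d) {a b c : ℕ} (ha : a ∈ Icc 1 n \ C)
    (hb : b ∈ Icc 1 n \ C) (hc : c ∈ Icc 1 n \ C) (hab : a < b) (hbc : b < c)
    (ha' : τ (insert a C) = false) (hb' : τ (insert b C) = true) : τ (insert c C) = true := by
  by_contra hc'
  rw [Bool.not_eq_true] at hc'
  have := hτ.apply_insert_between_eq hC hcard ha hb hc hab hbc (ha'.trans hc'.symm)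
  rw [hb', ha'] at this
  exact Bool.noConfusion this

lemma sub_le_plusCount_of_plus_runs (hτ : IsCoSignotope n d τ) {K : Finset ℕ} {x c y : ℕ}
    (hKI : K ⊆ Icc 1 n) (hc : c ∈ Icc 1 n \ K) (hxc : x < c) (hcy : c < y) (hxK : x ∉ K)
    (hleft : ∀ z ∈ Icc 1 c \ insert x K, τ (insert z (insert x K)) = true)
    (hright : ∀ z ∈ Icc c n \ insert y K, τ (insert z (insert y K)) = true) :
    n - #K - 1 ≤ plusCount τ := by
  set left := (Icc 1 c \ insert x K).image (insert · (insert x K))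
  set right := (Icc c n \ insert y K).image (insert · (insert y K))
  -- `x` lies in every set on the left and in no set on the right
  have hdisj : Disjoint left right := by
    simp only [left, right, disjoint_left, mem_image, mem_sdiff, mem_Icc, not_exists, not_and]
    rintro _ ⟨z, -, rfl⟩ z' ⟨hz', -⟩ heq
    have : x ∈ insert z' (insert y K) := heq ▸ by simp
    simp only [mem_insert] at this
    rcases this with rfl | rfl | h
    · omega
    · omega
    · exact hxK h
  have hcount := hτ.card_le_plusCount (s := left ∪ right) (by
    simp only [left, right, mem_union, mem_image]
    rintro _ (⟨z, hz, rfl⟩ | ⟨z, hz, rfl⟩)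
    · exact hleft z hz
    · exact hright z hz)
  have hinj (D s : Finset ℕ) : Set.InjOn (insert · D) ↑(s \ D) :=
    (insert_inj_on D).mono fun z hz => (mem_sdiff.1 hz).2
  rw [card_union_of_disjoint hdisj, card_image_of_injOn (hinj _ _),
    card_image_of_injOn (hinj _ _), sdiff_insert, sdiff_insert] at hcount
  have := card_Icc_sdiff_add_card_Icc_sdiff hKI hc
  have := pred_card_le_card_erase (s := Icc 1 c \ K) (a := x)
  have := pred_card_le_card_erase (s := Icc c n \ K) (a := y)
  omega

lemma apply_insert_insert_of_exchange (hτ : IsCoSignotope n d τ) (hcnt : plusCount τ + d ≤ n)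
    {K : Finset ℕ} {x c y : ℕ} (hxc : x < c) (hcy : c < y) (hxK : x ∉ K) (hcK : c ∉ K)
    (hyK : y ∉ K) (hx : τ (insert c (insert x K)) = true)
    (hy : τ (insert c (insert y K)) = true) : τ (insert x (insert y K)) = true := by
  have hcxK : c ∉ insert x K := by simp [hcK, hxc.ne']
  have hcyK : c ∉ insert y K := by simp [hcK, hcy.ne]
  obtain ⟨hcI, hxKI⟩ := insert_subset_iff.1 (hτ.1 _ hx).1
  obtain ⟨hxI, hKI⟩ := insert_subset_iff.1 hxKI
  have hyI := (insert_subset_iff.1 (insert_subset_iff.1 (hτ.1 _ hy).1).2).1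
  have hcardx := hτ.card_add_one_of_insert hcxK hx
  have hcardy := hτ.card_add_one_of_insert hcyK hy
  -- Otherwise every position `≤ c` of the series through `insert x K` and every position `≥ c`
  -- of the series through `insert y K` carries a `+`: that is `n - d + 1` distinct `+`-subsets.
  by_contra hE
  rw [Bool.not_eq_true] at hE
  have hleft : ∀ z ∈ Icc 1 c \ insert x K, τ (insert z (insert x K)) = true := by
    intro z hz
    obtain rfl | hzc := eq_or_lt_of_le (mem_Icc.1 (mem_sdiff.1 hz).1).2
    · exact hx
    refine hτ.apply_insert_eq_true_of_lt (insert_subset hxI hKI) hcardx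
      (sdiff_subset_sdiff (Icc_subset_Icc_right (mem_Icc.1 hcI).2) le_rfl hz)
      (mem_sdiff.2 ⟨hcI, hcxK⟩) (mem_sdiff.2 ⟨hyI, by simp [hyK, (hxc.trans hcy).ne']⟩)
      hzc hcy hx ?_
    rwa [insert_comm]
  have hright : ∀ z ∈ Icc c n \ insert y K, τ (insert z (insert y K)) = true := by
    intro z hz
    obtain rfl | hcz := eq_or_lt_of_le (mem_Icc.1 (mem_sdiff.1 hz).1).1
    · exact hy
    exact hτ.apply_insert_eq_true_of_gt (insert_subset hyI hKI) hcardy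
      (mem_sdiff.2 ⟨hxI, by simp [hxK, (hxc.trans hcy).ne]⟩) (mem_sdiff.2 ⟨hcI, hcyK⟩)
      (sdiff_subset_sdiff (Icc_subset_Icc_left (mem_Icc.1 hcI).1) le_rfl hz) hxc hcz hE hy
  have := hτ.sub_le_plusCount_of_plus_runs hKI (mem_sdiff.2 ⟨hcI, hcK⟩) hxc hcy hxK
    hleft hright
  rw [card_insert_of_notMem hxK] at hcardx
  omega

lemma plusConn_insert_of_lt (hτ : IsCoSignotope n d τ) (hcnt : plusCount τ + d ≤ n)
    {C : Finset ℕ} {x y : ℕ} (hxy : x < y) (hxC : x ∉ C) (hyC : y ∉ C)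
    (hx : τ (insert x C) = true) (hy : τ (insert y C) = true) :
    plusConn n d τ (insert x C) (insert y C) := by
  induction y using Nat.strong_induction_on generalizing C with
  | _ y ih =>
  obtain ⟨c, rfl⟩ : ∃ c, y = c + 1 := ⟨y - 1, by omega⟩
  obtain rfl | hxc := eq_or_lt_of_le (Nat.le_of_lt_succ hxy)
  · exact plusConn_insert_succ hτ hxC hyC hx hy
  by_cases hcC : c ∈ C
  · -- `c = y - 1 ∈ C` blocks the last move of `x`: exchange `c` for `c + 1` first.
    obtain ⟨K, hcK, rfl⟩ : ∃ K, c ∉ K ∧ C = insert c K :=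
      ⟨C.erase c, notMem_erase c C, (insert_erase hcC).symm⟩
    have hxK : x ∉ K := fun h => hxC (mem_insert_of_mem h)
    have hyK : c + 1 ∉ K := fun h => hyC (mem_insert_of_mem h)
    rw [insert_comm] at hx hy
    have hE := hτ.apply_insert_insert_of_exchange hcnt hxc (lt_add_one c) hxK hcK hyK hx hy
    have step₁ := plusConn_insert_succ hτ (by simp [hcK, hxc.ne']) (by simp [hyK]; omega)
      hx (by rwa [insert_comm])
    have step₂ := ih c (lt_add_one c) hxc (by simp [hxK, (hxc.trans (lt_add_one c)).ne])
      (by simp [hcK]) hE hy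
    rw [insert_comm c x K, insert_comm (c + 1) x K] at step₁
    rw [insert_comm c (c + 1) K] at step₂
    exact step₁.trans step₂
  · obtain ⟨hxI, hC⟩ := insert_subset_iff.1 (hτ.1 _ hx).1
    have hyI := (insert_subset_iff.1 (hτ.1 _ hy).1).1
    have hcI : c ∈ Icc 1 n := by simp only [mem_Icc] at hxI hyI ⊢; omega
    have hc := hτ.apply_insert_between_eq hC (hτ.card_add_one_of_insert hxC hx)
      (mem_sdiff.2 ⟨hxI, hxC⟩) (mem_sdiff.2 ⟨hcI, hcC⟩) (mem_sdiff.2 ⟨hyI, hyC⟩) hxc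
      (lt_add_one c) (hx.trans hy.symm)
    rw [hx] at hc
    exact (ih c (lt_add_one c) hxc hxC hcC hx hc).trans (plusConn_insert_succ hτ hcC hyC hc hy)

lemma plusConn_insert (hτ : IsCoSignotope n d τ) (hcnt : plusCount τ + d ≤ n)
    {C : Finset ℕ} {x y : ℕ} (hxC : x ∉ C) (hyC : y ∉ C)
    (hx : τ (insert x C) = true) (hy : τ (insert y C) = true) :
    plusConn n d τ (insert x C) (insert y C) := by
  rcases lt_trichotomy x y with h | rfl | h
  · exact hτ.plusConn_insert_of_lt hcnt h hxC hyC hx hy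
  · exact .refl
  · exact plusConn_symm (hτ.plusConn_insert_of_lt hcnt h hyC hxC hy hx)

end IsCoSignotope

lemma compFun_eq_true {n d i : ℕ} {τ : Finset ℕ → Bool} {A : Finset ℕ} :
    compFun n d τ i A = true ↔ A ∈ comp n d τ i :=
  ofPlusSet_eq_true

lemma plusCount_compFun (n d i : ℕ) (τ : Finset ℕ → Bool) :
    plusCount (compFun n d τ i) = (comp n d τ i).ncard :=
  congrArg Set.ncard (Set.ext fun _ => compFun_eq_true)

lemma mem_comp_compFun {n d i : ℕ} {τ : Finset ℕ → Bool} {B : Finset ℕ}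
    (hB : B ∈ comp n d τ i) : B ∈ comp n d (compFun n d τ i) i := by
  obtain ⟨hS, hτB, hconn⟩ := hB
  refine ⟨compFun_eq_true.2 ⟨hS, hS, .refl⟩, compFun_eq_true.2 ⟨hS, hτB, hconn⟩, ?_⟩
  clear hτB
  induction hconn with
  | refl => exact .refl
  | tail hA hstep ih =>
    exact ih.tail ⟨compFun_eq_true.2 ⟨hS, hstep.1, hA⟩,
      compFun_eq_true.2 ⟨hS, hstep.2.1, hA.tail hstep⟩, hstep.2.2⟩

lemma isCoSignotope_compFun {n d : ℕ} {τ : Finset ℕ → Bool} (hτ : IsCoSignotope n d τ)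
    (hcnt : plusCount τ + d ≤ n) (i : ℕ) : IsCoSignotope n d (compFun n d τ i) := by
  refine ⟨fun A hA => hτ.1 A (compFun_eq_true.1 hA).2.1, fun B hB hBcard b hb => ?_⟩
  set C := B.erase b
  by_cases hmeets : ∃ z ∈ Icc 1 n \ C, insert z C ∈ comp n d τ i
  · obtain ⟨z₀, hz₀, hz₀comp⟩ := hmeets
    have hseries : series n (compFun n d τ i) C = series n τ C := by
      refine List.map_congr_left fun z hz => ?_
      have hzC := (mem_sdiff.1 ((mem_sort _).1 hz)).2
      cases hτz : τ (insert z C)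
      · rw [Bool.eq_false_iff, ne_eq, compFun_eq_true]
        exact fun h => Bool.noConfusion (hτz.symm.trans h.2.1)
      · rw [compFun_eq_true]
        exact ⟨hz₀comp.1, hτz, hz₀comp.2.2.trans
          (hτ.plusConn_insert hcnt (mem_sdiff.1 hz₀).2 hzC hz₀comp.2.1 hτz)⟩
    rw [hseries]
    exact hτ.2 B hB hBcard b hb
  · simp only [not_exists, not_and] at hmeets
    rw [signChanges_eq_zero_of_forall_eq (a := false)]
    · exact zero_le_one
    · intro v hv
      obtain ⟨z, hz, rfl⟩ := List.mem_map.1 hv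
      rw [Bool.eq_false_iff, ne_eq, compFun_eq_true]
      exact hmeets z ((mem_sort _).1 hz)

theorem statement10_general (n d p : ℕ) (hp : p + d ≤ n)
    (τ : Finset ℕ → Bool) (hτ : τ ∈ coSigSet n d p) (i : ℕ) :
    compFun n d τ i ∈ coSigOnly n d ((comp n d τ i).ncard) i := by
  obtain ⟨hτ, rfl⟩ := hτ
  exact ⟨isCoSignotope_compFun hτ hp i, plusCount_compFun n d i τ,
    fun _ hB => mem_comp_compFun (compFun_eq_true.1 hB)⟩

/-- **Lemma.** For `τ ∈ 𝒮̄_p(n,d)` with `+`-component decomposition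
`Δ(τ) = (τ_0, …, τ_d)`, each `τ_i` is a co-signotope in `𝒮̄_{|𝒞^τ_i|, i}(n,d)`. -/
theorem statement10 (n d p : ℕ) (hdn : d < n) (hp : p + d ≤ n)
    (τ : Finset ℕ → Bool) (hτ : τ ∈ coSigSet n d p) (i : ℕ) (hi : i ≤ d) :
    compFun n d τ i ∈ coSigOnly n d ((comp n d τ i).ncard) i :=
  statement10_general n d p hp τ hτ i
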